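/- Let $1<p,q<\infty$ and let $\omega, v$ be weights on $\mathbb{R}^n$. Let $r > 1$ and suppose the reverse Hölder inequalities $\big(\frac{1}{|Q|}\int_Q \omega^{qr}\big)^{1/r} \le C_1 \frac{1}{|Q|}\int_Q \omega^q$ and $\big(\frac{1}{|Q|}\int_Q \omega^{-p'r}\big)^{1/r} \le C_2 \frac{1}{|Q|}\int_Q \omega^{-p'}$ hold for all cubes $Q$. Then for any measurable $b$ and real $s$, $[e^{sb}\omega]_{A_{p,q}} \le C_1 C_2^{q/p'}\, [\omega]_{A_{p,q}}\, [e^{r'sb}]_{A_{p,q}}^{1/r'}$, where $r' = r/(r-1)$. -/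

import Mathlib

/-! Hölder with exponents `r, r'` on each average of `(e^{sb} ω)^q` and `(e^{sb} ω)^{-p'}`
splits off `(⨍ ω^{qr})^{1/r}` and `(⨍ ω^{-p'r})^{1/r}`, which the reverse Hölder inequalities
bound by `C₁ ⨍ ω^q` and `C₂ ⨍ ω^{-p'}`; the remaining factors are the averages of
`e^{r'sbq}` and `e^{-r'sbp'}`, i.e. the `A_{p,q}` averages of `e^{r'sb}` raised to `1/r'`. -/

open MeasureTheory ENNReal Real

noncomputable section

def cube (n : ℕ) (c : Fin n → ℝ) (h : ℝ) : Set (Fin n → ℝ) :=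
  {x | ∀ i, |x i - c i| ≤ h / 2}

def eavg (n : ℕ) (w : (Fin n → ℝ) → ℝ≥0∞) (Q : Set (Fin n → ℝ)) : ℝ≥0∞ :=
  (volume Q)⁻¹ * ∫⁻ x in Q, w x

/-- The `A_{p,q}` constant `[ω]_{A_{p,q}} = sup_Q (⨍_Q ω^q)(⨍_Q ω^{-p'})^{q/p'}`. -/
def apqConst (n : ℕ) (p q : ℝ) (w : (Fin n → ℝ) → ℝ≥0∞) : ℝ≥0∞ :=
  ⨆ (c : Fin n → ℝ) (h : {h : ℝ // 0 < h}),
    eavg n (fun x => w x ^ q) (cube n c h) *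
      (eavg n (fun x => w x ^ (-(p / (p - 1)))) (cube n c h)) ^ (q / (p / (p - 1)))

lemma ofReal_exp_rpow (t z : ℝ) :
    ENNReal.ofReal (exp t) ^ z = ENNReal.ofReal (exp (t * z)) := by
  rw [ofReal_rpow_of_pos (exp_pos t), exp_mul]

lemma ofReal_exp_mul_rpow (t : ℝ) (x : ℝ≥0∞) (z : ℝ) :
    (ENNReal.ofReal (exp t) * x) ^ z = ENNReal.ofReal (exp (t * z)) * x ^ z := by
  rw [mul_rpow_eq_ite, if_neg (by simp [exp_pos]), ofReal_exp_rpow]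

lemma mul_rpow_mul_rpow_rearrange (C₁ C₂ a₁ a₂ e₁ e₂ : ℝ≥0∞) {t u : ℝ} (ht : 0 ≤ t)
    (hu : 0 ≤ u) :
    C₁ * a₁ * e₁ ^ t * (C₂ * a₂ * e₂ ^ t) ^ u =
      C₁ * C₂ ^ u * (a₁ * a₂ ^ u) * (e₁ * e₂ ^ u) ^ t := by
  rw [mul_rpow_of_nonneg _ _ hu, mul_rpow_of_nonneg _ _ hu, mul_rpow_of_nonneg _ _ ht,
    ← ENNReal.rpow_mul, ← ENNReal.rpow_mul, mul_comm t u]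
  ring

section Averages

variable {n : ℕ} {Q : Set (Fin n → ℝ)}

lemma eavg_mul_le {r r' : ℝ} (hrr : r.HolderConjugate r') {f g : (Fin n → ℝ) → ℝ≥0∞}
    (hf : Measurable f) (hg : Measurable g) :
    eavg n (fun x => f x * g x) Q ≤
      eavg n (fun x => f x ^ r) Q ^ (1 / r) * eavg n (fun x => g x ^ r') Q ^ (1 / r') := by
  have hsplit : (volume Q)⁻¹ = (volume Q)⁻¹ ^ (1 / r) * (volume Q)⁻¹ ^ (1 / r') := by
    rw [← rpow_add_of_nonneg _ _ hrr.one_div_nonneg hrr.symm.one_div_nonneg, one_div, one_div,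
      hrr.inv_add_inv_eq_one, ENNReal.rpow_one]
  calc eavg n (fun x => f x * g x) Q
      ≤ (volume Q)⁻¹ * ((∫⁻ x in Q, f x ^ r) ^ (1 / r) * (∫⁻ x in Q, g x ^ r') ^ (1 / r')) := by
        rw [eavg]
        gcongr
        exact lintegral_mul_le_Lp_mul_Lq _ hrr hf.aemeasurable hg.aemeasurable
    _ = eavg n (fun x => f x ^ r) Q ^ (1 / r) * eavg n (fun x => g x ^ r') Q ^ (1 / r') := by
        conv_lhs => rw [hsplit]
        rw [eavg, eavg, mul_rpow_of_nonneg _ _ hrr.one_div_nonneg,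
          mul_rpow_of_nonneg _ _ hrr.symm.one_div_nonneg]
        ring

lemma eavg_exp_mul_rpow_le {ω : (Fin n → ℝ) → ℝ≥0∞} (hω : Measurable ω)
    {b : (Fin n → ℝ) → ℝ} (hb : Measurable b) (s : ℝ) {r r' : ℝ} (hrr : r.HolderConjugate r')
    (a : ℝ) :
    eavg n (fun x => (ENNReal.ofReal (exp (s * b x)) * ω x) ^ a) Q ≤
      eavg n (fun x => ω x ^ (a * r)) Q ^ (1 / r) *
        eavg n (fun x => ENNReal.ofReal (exp (r' * s * b x)) ^ a) Q ^ (1 / r') := by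
  have hmeas : Measurable fun x => ENNReal.ofReal (exp (s * b x * a)) := by fun_prop
  convert eavg_mul_le hrr (hω.pow_const a) hmeas using 5
  · rw [ofReal_exp_mul_rpow, mul_comm]
  · rw [ENNReal.rpow_mul]
  · rw [ofReal_exp_rpow, ofReal_exp_rpow]
    ring_nf

lemma eavg_exp_mul_rpow_le_of_reverseHolder {ω : (Fin n → ℝ) → ℝ≥0∞} (hω : Measurable ω)
    {b : (Fin n → ℝ) → ℝ} (hb : Measurable b) (s : ℝ) {r r' : ℝ} (hrr : r.HolderConjugate r')
    {a : ℝ} {C : ℝ≥0∞}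
    (hRH : eavg n (fun x => ω x ^ (a * r)) Q ^ (1 / r) ≤ C * eavg n (fun x => ω x ^ a) Q) :
    eavg n (fun x => (ENNReal.ofReal (exp (s * b x)) * ω x) ^ a) Q ≤
      C * eavg n (fun x => ω x ^ a) Q *
        eavg n (fun x => ENNReal.ofReal (exp (r' * s * b x)) ^ a) Q ^ (1 / r') :=
  (eavg_exp_mul_rpow_le hω hb s hrr a).trans (by gcongr)

end Averages

theorem apq_perturbation_general
    (n : ℕ) (p q : ℝ) (hp : 1 < p) (hq : 1 < q)
    (ω : (Fin n → ℝ) → ℝ≥0∞) (hω : Measurable ω)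
    (b : (Fin n → ℝ) → ℝ) (hb : Measurable b) (s : ℝ)
    (r : ℝ) (hr : 1 < r) (C₁ C₂ : ℝ)
    (hRH1 : ∀ (c : Fin n → ℝ) (h : ℝ), 0 < h →
      (eavg n (fun x => ω x ^ (q * r)) (cube n c h)) ^ (1 / r) ≤
        ENNReal.ofReal C₁ * eavg n (fun x => ω x ^ q) (cube n c h))
    (hRH2 : ∀ (c : Fin n → ℝ) (h : ℝ), 0 < h →
      (eavg n (fun x => ω x ^ (-(p / (p - 1)) * r)) (cube n c h)) ^ (1 / r) ≤
        ENNReal.ofReal C₂ * eavg n (fun x => ω x ^ (-(p / (p - 1)))) (cube n c h)) :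
    apqConst n p q (fun x => ENNReal.ofReal (Real.exp (s * b x)) * ω x) ≤
      ENNReal.ofReal C₁ * (ENNReal.ofReal C₂) ^ (q / (p / (p - 1))) *
        apqConst n p q ω *
        (apqConst n p q (fun x => ENNReal.ofReal (Real.exp ((r / (r - 1)) * s * b x))))
          ^ (1 / (r / (r - 1))) := by
  have hrr : r.HolderConjugate (r / (r - 1)) :=
    (holderConjugate_iff_eq_conjExponent hr).2 rfl
  have hexp : 0 ≤ q / (p / (p - 1)) := by
    have : 0 < p - 1 := by linarith
    positivity
  refine iSup₂_le fun c ⟨h, hh⟩ => ?_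
  calc _ ≤ _ * _ ^ (q / (p / (p - 1))) := by
        gcongr
        · exact eavg_exp_mul_rpow_le_of_reverseHolder hω hb s hrr (hRH1 c h hh)
        · exact eavg_exp_mul_rpow_le_of_reverseHolder hω hb s hrr (hRH2 c h hh)
    _ = _ := mul_rpow_mul_rpow_rearrange _ _ _ _ _ _ hrr.symm.one_div_nonneg hexp
    _ ≤ _ := by gcongr <;> exact le_iSup₂_of_le c ⟨h, hh⟩ le_rfl

/-- under reverse Hölder inequalities for `ω^q` and `ω^{-p'}` with exponent `r`,
`[e^{sb}ω]_{A_{p,q}} ≤ C₁ C₂^{q/p'} [ω]_{A_{p,q}} [e^{r'sb}]_{A_{p,q}}^{1/r'}`. -/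
theorem apq_perturbation
    (n : ℕ) (p q : ℝ) (hp : 1 < p) (hq : 1 < q)
    (ω : (Fin n → ℝ) → ℝ≥0∞) (hω : Measurable ω)
    (b : (Fin n → ℝ) → ℝ) (hb : Measurable b) (s : ℝ)
    (r : ℝ) (hr : 1 < r) (C₁ C₂ : ℝ) (hC₁ : 0 < C₁) (hC₂ : 0 < C₂)
    (hRH1 : ∀ (c : Fin n → ℝ) (h : ℝ), 0 < h →
      (eavg n (fun x => ω x ^ (q * r)) (cube n c h)) ^ (1 / r) ≤
        ENNReal.ofReal C₁ * eavg n (fun x => ω x ^ q) (cube n c h))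
    (hRH2 : ∀ (c : Fin n → ℝ) (h : ℝ), 0 < h →
      (eavg n (fun x => ω x ^ (-(p / (p - 1)) * r)) (cube n c h)) ^ (1 / r) ≤
        ENNReal.ofReal C₂ * eavg n (fun x => ω x ^ (-(p / (p - 1)))) (cube n c h)) :
    apqConst n p q (fun x => ENNReal.ofReal (Real.exp (s * b x)) * ω x) ≤
      ENNReal.ofReal C₁ * (ENNReal.ofReal C₂) ^ (q / (p / (p - 1))) *
        apqConst n p q ω *
        (apqConst n p q (fun x => ENNReal.ofReal (Real.exp ((r / (r - 1)) * s * b x))))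
          ^ (1 / (r / (r - 1))) :=
  apq_perturbation_general n p q hp hq ω hω b hb s r hr C₁ C₂ hRH1 hRH2

end
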